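/- In the setting of the previous approximation lemma, the Legendre spectral coefficients a_n^N(m₁) of (x_r^N)^{(m₁)} satisfy |a_n^N(m₁)| ≤ (6/√π)(U(x_r^{(m₁+1)}) + V(x_r^{(m₁+1)})) n^{-3/2} for n = 1,...,N-r-1; consequently ∑_{n=0}^{N-r-m₁+1} |a_n^N(m₁)| ≤ |a_0^N| + (6/√π)(U + V) ζ(3/2), where ζ is the Riemann zeta function. -/

import Mathlib

open Set Polynomial

/-- The `n`-th Legendre polynomial, via the Rodrigues formula. -/
noncomputable def legendreP (n : ℕ) : Polynomial ℝ :=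
  Polynomial.C (1 / ((2 : ℝ) ^ n * n.factorial)) *
    Polynomial.derivative^[n] ((Polynomial.X ^ 2 - 1) ^ n)

/-- The `n`-th Legendre spectral coefficient of a function on `[-1,1]`. -/
noncomputable def legendreCoeff (h : ℝ → ℝ) (n : ℕ) : ℝ :=
  ((n : ℝ) + 1 / 2) * ∫ t in (-1 : ℝ)..1, h t * (legendreP n).eval t

/-!
Integrating by parts against the antiderivative `(Pₙ₊₁ - Pₙ₋₁)/(2n+1)` of `Pₙ`, which vanishes
at `±1`, gives `aₙ = -½ ∫ ψ (Pₙ₊₁ - Pₙ₋₁)`. For `n = 1` this is bounded through `sup |ψ| ≤ U`.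
For `n ≥ 2` a second, Riemann–Stieltjes, integration by parts against an antiderivative `R` of
`Pₙ₊₁ - Pₙ₋₁` vanishing at `±1` gives `|aₙ| ≤ ½ V sup |R|`. Since
`(k+1)(k+2)(Pₖ - Pₖ₊₂) = (2k+3)(1-x²)P'ₖ₊₁` and `(1-x²)|P'ₖ| ≤ √k` on `[-1,1]` (the energy
`((1-x²)P'ₖ)² + k(k+1)(1-x²)Pₖ²` is maximal at `0`), `sup |R| = O(n^{-3/2})`.
Summing `n^{-3/2}` gives the `ζ(3/2)` bound.
-/

open MeasureTheory

lemma le_apply_zero_of_mul_deriv_nonpos {f f' : ℝ → ℝ} (hf : ∀ x, HasDerivAt f (f' x) x)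
    (hf' : ∀ x, x * f' x ≤ 0) (x : ℝ) : f x ≤ f 0 := by
  have hcont : Continuous f := continuous_iff_continuousAt.2 fun x => (hf x).continuousAt
  rcases le_total x 0 with hx | hx
  · refine monotoneOn_of_hasDerivWithinAt_nonneg (convex_Icc x 0) hcont.continuousOn
      (fun t _ => (hf t).hasDerivWithinAt) (fun t ht => ?_) ⟨le_rfl, hx⟩ ⟨hx, le_rfl⟩ hx
    rw [interior_Icc] at ht
    exact nonneg_of_mul_nonpos_right (hf' t) ht.2
  · refine antitoneOn_of_hasDerivWithinAt_nonpos (convex_Icc 0 x) hcont.continuousOn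
      (fun t _ => (hf t).hasDerivWithinAt) (fun t ht => ?_) ⟨le_rfl, hx⟩ ⟨hx, le_rfl⟩ hx
    rw [interior_Icc] at ht
    exact nonpos_of_mul_nonpos_right (hf' t) ht.1

lemma Polynomial.iterate_derivative_succ_mul_X {R : Type*} [CommSemiring R] (m : ℕ) (p : R[X]) :
    derivative^[m + 1] (p * X) =
      derivative^[m + 1] p * X + ((m : R[X]) + 1) * derivative^[m] p := by
  rw [Polynomial.iterate_derivative_mul_X (n := m + 1), nsmul_eq_mul]
  push_cast
  rfl

lemma BoundedVariationOn.intervalIntegrable {f : ℝ → ℝ} {a b : ℝ}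
    (hf : BoundedVariationOn f (Icc a b)) (hab : a ≤ b) : IntervalIntegrable f volume a b := by
  rw [← uIcc_of_le hab] at hf
  obtain ⟨p, q, hp, hq, rfl⟩ := hf.locallyBoundedVariationOn.exists_monotoneOn_sub_monotoneOn
  exact hp.intervalIntegrable.sub hq.intervalIntegrable

lemma eVariationOn.sum_range_Icc {α E : Type*} [LinearOrder α] [PseudoEMetricSpace E] (f : α → E)
    {x : ℕ → α} (hx : Monotone x) (k : ℕ) :
    ∑ i ∈ Finset.range k, eVariationOn f (Icc (x i) (x (i + 1)))
      = eVariationOn f (Icc (x 0) (x k)) := by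
  induction k with
  | zero => simp
  | succ k ih =>
    rw [Finset.sum_range_succ, ih]
    simpa using eVariationOn.Icc_add_Icc f (s := univ) (hx k.zero_le) (hx k.le_succ) (mem_univ _)

lemma abs_sum_mul_sub_le {u v : ℕ → ℝ} {k : ℕ} {M : ℝ} (h0 : v 0 = 0) (hk : v k = 0)
    (hM : ∀ i ≤ k, |v i| ≤ M) :
    |∑ i ∈ Finset.range k, u i * (v (i + 1) - v i)|
      ≤ (∑ i ∈ Finset.range k, |u (i + 1) - u i|) * M := by
  have hsum : ∑ i ∈ Finset.range k, u i * (v (i + 1) - v i)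
      = -∑ i ∈ Finset.range k, (u (i + 1) - u i) * v (i + 1) := by
    have := Finset.sum_range_sub (fun i => u i * v i) k
    simp only [h0, hk, mul_zero, sub_zero] at this
    rw [eq_neg_iff_add_eq_zero, ← Finset.sum_add_distrib, ← this]
    exact Finset.sum_congr rfl fun i _ => by ring
  rw [hsum, abs_neg, Finset.sum_mul]
  refine (Finset.abs_sum_le_sum_abs _ _).trans (Finset.sum_le_sum fun i hi => ?_)
  rw [abs_mul]
  exact mul_le_mul_of_nonneg_left (hM _ (Finset.mem_range.1 hi)) (abs_nonneg _)

section Stieltjes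

variable {ψ g R : ℝ → ℝ}

lemma abs_integral_mul_sub_le {c d Mg : ℝ} (hcd : c ≤ d) (hψ : BoundedVariationOn ψ (Icc c d))
    (hR : ∀ t ∈ Icc c d, HasDerivAt R (g t) t) (hg : ContinuousOn g (Icc c d))
    (hMg : ∀ t ∈ Icc c d, |g t| ≤ Mg) :
    |(∫ t in c..d, ψ t * g t) - ψ c * (R d - R c)|
      ≤ (eVariationOn ψ (Icc c d)).toReal * Mg * (d - c) := by
  have hψi := hψ.intervalIntegrable hcd
  rw [← uIcc_of_le hcd] at hR hg
  have hFTC : ∫ t in c..d, g t = R d - R c :=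
    intervalIntegral.integral_eq_sub_of_hasDerivAt hR hg.intervalIntegrable
  have hsplit : (∫ t in c..d, ψ t * g t) - ψ c * (R d - R c) = ∫ t in c..d, (ψ t - ψ c) * g t := by
    rw [← hFTC, ← intervalIntegral.integral_const_mul, ← intervalIntegral.integral_sub
      (hψi.mul_continuousOn hg) (hg.intervalIntegrable.const_mul _)]
    exact intervalIntegral.integral_congr fun t _ => by ring
  rw [hsplit, ← Real.norm_eq_abs, ← abs_of_nonneg (sub_nonneg.2 hcd)]
  refine intervalIntegral.norm_integral_le_of_norm_le_const fun t ht => ?_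
  have ht' : t ∈ Icc c d := uIcc_of_le hcd ▸ uIoc_subset_uIcc ht
  rw [Real.norm_eq_abs, abs_mul, ← Real.dist_eq]
  exact mul_le_mul (hψ.dist_le ht' (left_mem_Icc.2 hcd)) (hMg t ht') (abs_nonneg _)
    ENNReal.toReal_nonneg

lemma abs_integral_mul_le_of_partition {a b M Mg δ : ℝ} {x : ℕ → ℝ} {k : ℕ}
    (hψ : BoundedVariationOn ψ (Icc a b))
    (hR : ∀ t ∈ Icc a b, HasDerivAt R (g t) t) (hg : ContinuousOn g (Icc a b))
    (hRa : R a = 0) (hRb : R b = 0) (hM : ∀ t ∈ Icc a b, |R t| ≤ M)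
    (hMg : ∀ t ∈ Icc a b, |g t| ≤ Mg)
    (hx : Monotone x) (hx0 : x 0 = a) (hxk : x k = b) (hxδ : ∀ i < k, x (i + 1) - x i ≤ δ) :
    |∫ t in a..b, ψ t * g t| ≤ (eVariationOn ψ (Icc a b)).toReal * (M + Mg * δ) := by
  have hmem : ∀ i ≤ k, x i ∈ Icc a b := fun i hi => ⟨hx0 ▸ hx i.zero_le, hxk ▸ hx hi⟩
  have hab : a ≤ b := hx0 ▸ hxk ▸ hx k.zero_le
  have hsub : ∀ i < k, Icc (x i) (x (i + 1)) ⊆ Icc a b := fun i hi =>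
    Icc_subset_Icc (hmem i hi.le).1 (hmem (i + 1) hi).2
  set V : ℕ → ℝ := fun i => (eVariationOn ψ (Icc (x i) (x (i + 1)))).toReal
  have hVsum : ∑ i ∈ Finset.range k, V i = (eVariationOn ψ (Icc a b)).toReal := by
    rw [← ENNReal.toReal_sum fun i hi => hψ.mono (hsub i (Finset.mem_range.1 hi)),
      eVariationOn.sum_range_Icc ψ hx, hx0, hxk]
  have hψint := hψ.intervalIntegrable hab
  have hpieces : ∫ t in a..b, ψ t * g t
      = ∑ i ∈ Finset.range k, ∫ t in x i..x (i + 1), ψ t * g t := by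
    rw [intervalIntegral.sum_integral_adjacent_intervals, hx0, hxk]
    intro i hi
    have hsub' : uIcc (x i) (x (i + 1)) ⊆ uIcc a b := by
      rw [uIcc_of_le (hx i.le_succ), uIcc_of_le hab]
      exact hsub i hi
    exact (hψint.mono_set hsub').mul_continuousOn (hg.mono (uIcc_of_le hab ▸ hsub'))
  have habel : |∑ i ∈ Finset.range k, ψ (x i) * (R (x (i + 1)) - R (x i))|
      ≤ (eVariationOn ψ (Icc a b)).toReal * M := by
    refine (abs_sum_mul_sub_le (u := ψ ∘ x) (v := R ∘ x) (by simp [hx0, hRa]) (by simp [hxk, hRb])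
      fun i hi => hM _ (hmem i hi)).trans ?_
    have hM0 : 0 ≤ M := (abs_nonneg _).trans (hM a (left_mem_Icc.2 hab))
    refine mul_le_mul_of_nonneg_right (hVsum ▸ Finset.sum_le_sum fun i hi => ?_) hM0
    rw [← Real.dist_eq]
    exact (hψ.mono (hsub i (Finset.mem_range.1 hi))).dist_le (right_mem_Icc.2 (hx i.le_succ))
      (left_mem_Icc.2 (hx i.le_succ))
  have hlocal_sum : |∑ i ∈ Finset.range k,
        ((∫ t in x i..x (i + 1), ψ t * g t) - ψ (x i) * (R (x (i + 1)) - R (x i)))|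
      ≤ (eVariationOn ψ (Icc a b)).toReal * Mg * δ := by
    have hMg0 : 0 ≤ Mg := (abs_nonneg _).trans (hMg a (left_mem_Icc.2 hab))
    refine ((Finset.abs_sum_le_sum_abs _ _).trans
      (Finset.sum_le_sum (g := fun i => V i * Mg * δ) fun i hi => ?_)).trans_eq ?_
    · replace hi := Finset.mem_range.1 hi
      refine (abs_integral_mul_sub_le (hx i.le_succ) (hψ.mono (hsub i hi))
        (fun t ht => hR t (hsub i hi ht)) (hg.mono (hsub i hi))
        (fun t ht => hMg t (hsub i hi ht))).trans ?_
      exact mul_le_mul_of_nonneg_left (hxδ i hi) (mul_nonneg ENNReal.toReal_nonneg hMg0)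
    · rw [← Finset.sum_mul, ← Finset.sum_mul, hVsum]
  have htri := abs_sub_abs_le_abs_sub (∑ i ∈ Finset.range k, ∫ t in x i..x (i + 1), ψ t * g t)
    (∑ i ∈ Finset.range k, ψ (x i) * (R (x (i + 1)) - R (x i)))
  rw [← Finset.sum_sub_distrib] at htri
  rw [hpieces, mul_add]
  linarith

lemma abs_integral_mul_le_eVariationOn_mul {a b M : ℝ} (hab : a ≤ b)
    (hψ : BoundedVariationOn ψ (Icc a b))
    (hR : ∀ t ∈ Icc a b, HasDerivAt R (g t) t) (hg : ContinuousOn g (Icc a b))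
    (hRa : R a = 0) (hRb : R b = 0) (hM : ∀ t ∈ Icc a b, |R t| ≤ M) :
    |∫ t in a..b, ψ t * g t| ≤ (eVariationOn ψ (Icc a b)).toReal * M := by
  obtain ⟨Mg, hMg⟩ := isCompact_Icc.exists_bound_of_continuousOn hg
  have hlim : Filter.Tendsto
      (fun k : ℕ => (eVariationOn ψ (Icc a b)).toReal * (M + Mg * ((b - a) / k)))
      Filter.atTop (nhds ((eVariationOn ψ (Icc a b)).toReal * (M + Mg * 0))) :=
    ((tendsto_const_div_atTop_nhds_zero_nat (b - a)).const_mul Mg |>.const_add M).const_mul _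
  rw [mul_zero, add_zero] at hlim
  refine ge_of_tendsto hlim (Filter.eventually_atTop.2 ⟨1, fun k hk1 => ?_⟩)
  have hk : (k : ℝ) ≠ 0 := by positivity
  -- the uniform partition of `[a, b]` into `k` pieces, frozen at `b` after step `k`
  refine abs_integral_mul_le_of_partition (x := fun i => a + (b - a) / k * (min i k : ℕ)) (k := k)
    hψ hR hg hRa hRb hM
    (fun t ht => by simpa using hMg t ht) (fun i j hij => ?_) (by simp) (by simp [hk])
    (fun i hi => ?_)
  · have : (min i k : ℕ) ≤ (min j k : ℕ) := min_le_min_right k hij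
    dsimp only
    gcongr
  · have : ((min (i + 1) k : ℕ) : ℝ) ≤ (min i k : ℕ) + 1 := by exact_mod_cast (by omega)
    have hδ : 0 ≤ (b - a) / k := div_nonneg (sub_nonneg.2 hab) (Nat.cast_nonneg k)
    nlinarith

end Stieltjes

lemma integral_mul_eval_derivative_eq_neg {φ ψ : ℝ → ℝ} {a b : ℝ}
    (hφ : ∀ t ∈ uIcc a b, HasDerivAt φ (ψ t) t) (hψ : IntervalIntegrable ψ volume a b) {Q : ℝ[X]}
    (ha : Q.eval a = 0) (hb : Q.eval b = 0) :
    ∫ t in a..b, φ t * (derivative Q).eval t = -∫ t in a..b, ψ t * Q.eval t := by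
  rw [intervalIntegral.integral_mul_deriv_eq_deriv_mul hφ (fun t _ => Q.hasDerivAt t) hψ
    ((Polynomial.continuous _).intervalIntegrable _ _), ha, hb]
  ring

lemma rpow_three_halves_eq {x : ℝ} (hx : 0 ≤ x) : x ^ ((3 : ℝ) / 2) = x * Real.sqrt x := by
  rw [show (3 : ℝ) / 2 = 1 + 1 / 2 by norm_num, Real.rpow_add' hx (by norm_num), Real.rpow_one,
    Real.sqrt_eq_rpow]

lemma one_div_mul_sqrt_add_one_div_mul_sqrt_le (x : ℝ) (hx : 0 ≤ x) :
    1 / ((x + 4) * Real.sqrt (x + 3)) + 1 / ((x + 2) * Real.sqrt (x + 1))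
      ≤ 3 / ((x + 2) * Real.sqrt (x + 2)) := by
  have h1 : 1 / ((x + 4) * Real.sqrt (x + 3)) ≤ 1 / ((x + 2) * Real.sqrt (x + 2)) := by
    gcongr <;> linarith
  have h2 : 1 / ((x + 2) * Real.sqrt (x + 1)) ≤ 2 / ((x + 2) * Real.sqrt (x + 2)) := by
    have hs : Real.sqrt (x + 2) ≤ 2 * Real.sqrt (x + 1) := by
      have ha := Real.sq_sqrt (by linarith : 0 ≤ x + 2)
      have hb := Real.sq_sqrt (by linarith : 0 ≤ x + 1)
      nlinarith [Real.sqrt_nonneg (x + 1), Real.sqrt_nonneg (x + 2)]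
    rw [div_le_div_iff₀ (by positivity) (by positivity)]
    nlinarith [Real.sqrt_nonneg (x + 1)]
  have h3 : 1 / ((x + 2) * Real.sqrt (x + 2)) + 2 / ((x + 2) * Real.sqrt (x + 2))
      = 3 / ((x + 2) * Real.sqrt (x + 2)) := by ring
  linarith

lemma sum_range_abs_le_add_mul_tsum {a : ℕ → ℝ} {C p : ℝ} (hp : 1 < p)
    (ha : ∀ n, 1 ≤ n → |a n| ≤ C / (n : ℝ) ^ p) (m : ℕ) :
    ∑ n ∈ Finset.range (m + 1), |a n| ≤ |a 0| + C * ∑' k : ℕ, 1 / ((k : ℝ) + 1) ^ p := by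
  have hC : 0 ≤ C := by
    have := (abs_nonneg _).trans (ha 1 le_rfl)
    rwa [Nat.cast_one, Real.one_rpow, div_one] at this
  have hsum : Summable fun k : ℕ => 1 / ((k : ℝ) + 1) ^ p := by
    simpa using (summable_nat_add_iff 1).2 (Real.summable_one_div_nat_rpow.2 hp)
  rw [Finset.sum_range_succ', add_comm]
  gcongr
  calc ∑ i ∈ Finset.range m, |a (i + 1)|
      ≤ ∑ i ∈ Finset.range m, C * (1 / ((i : ℝ) + 1) ^ p) :=
        Finset.sum_le_sum fun i _ => by
          rw [mul_one_div, ← Nat.cast_add_one]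
          exact ha (i + 1) (by omega)
    _ = C * ∑ i ∈ Finset.range m, 1 / ((i : ℝ) + 1) ^ p := by rw [Finset.mul_sum]
    _ ≤ C * ∑' k : ℕ, 1 / ((k : ℝ) + 1) ^ p := by
        gcongr
        exact hsum.sum_le_tsum _ fun i _ => by positivity

lemma legendreP_eq (n : ℕ) :
    legendreP n = C ((2 ^ n * n.factorial : ℝ)⁻¹) * derivative^[n] ((X ^ 2 - 1) ^ n) := by
  rw [legendreP, one_div]

lemma derivative_X_sq_sub_one_pow_succ (k : ℕ) :
    derivative ((X ^ 2 - 1 : ℝ[X]) ^ (k + 1)) = C (2 * ((k : ℝ) + 1)) * ((X ^ 2 - 1) ^ k * X) := by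
  rw [derivative_pow]
  simp only [derivative_sub, derivative_X_pow, derivative_one, map_mul, map_add, map_one,
    map_natCast, C_ofNat]
  push_cast
  ring

lemma derivative_legendreP_succ (k : ℕ) :
    derivative (legendreP (k + 1)) =
      X * derivative (legendreP k) + ((k : ℝ[X]) + 1) * legendreP k := by
  have hc : C ((2 ^ (k + 1) * (k + 1).factorial : ℝ)⁻¹) * C (2 * ((k : ℝ) + 1))
      = C ((2 ^ k * k.factorial : ℝ)⁻¹) := by
    rw [← C_mul, Nat.factorial_succ]
    congr 1
    push_cast
    field_simp
    ring
  rw [legendreP_eq, legendreP_eq, derivative_C_mul, derivative_C_mul,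
    ← Function.iterate_succ_apply' derivative, Function.iterate_succ_apply,
    derivative_X_sq_sub_one_pow_succ, iterate_derivative_C_mul, iterate_derivative_succ_mul_X,
    ← mul_assoc, hc, Function.iterate_succ_apply']
  ring

lemma legendreP_zero : legendreP 0 = 1 := by
  simp [legendreP]

lemma legendreP_ode (n : ℕ) :
    (X ^ 2 - 1) * derivative (derivative (legendreP n)) + 2 * X * derivative (legendreP n)
      = ((n : ℝ[X]) * ((n : ℝ[X]) + 1)) * legendreP n := by
  rcases n with _ | k
  · simp [legendreP_zero]
  set w : ℝ[X] := (X ^ 2 - 1) ^ (k + 1)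
  -- `(X² - 1) w' = 2 (k + 1) X w`, differentiated `k + 2` times
  have core : derivative w * X * X - derivative w = C (2 * ((k : ℝ) + 1)) * (w * X) := by
    rw [derivative_X_sq_sub_one_pow_succ]
    ring
  have h := congrArg (derivative^[k + 2]) core
  rw [iterate_derivative_sub, iterate_derivative_C_mul, iterate_derivative_succ_mul_X (k + 1),
    iterate_derivative_succ_mul_X (k + 1), iterate_derivative_succ_mul_X (k + 1),
    iterate_derivative_succ_mul_X k] at h
  simp only [← Function.iterate_succ_apply derivative] at h
  rw [legendreP_eq, derivative_C_mul, derivative_C_mul, ← Function.iterate_succ_apply' derivative,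
    ← Function.iterate_succ_apply' derivative]
  simp only [map_mul, map_add, map_one, map_natCast, C_ofNat] at h
  push_cast at h ⊢
  linear_combination C ((2 ^ (k + 1) * (k + 1).factorial : ℝ)⁻¹) * h

lemma legendreP_one : legendreP 1 = X := by
  rw [legendreP_eq]
  simp only [Function.iterate_one, pow_one, derivative_sub, derivative_X_pow, derivative_one]
  rw [sub_zero, ← mul_assoc, ← C_mul]
  norm_num

lemma succ_mul_legendreP_succ (k : ℕ) :
    ((k : ℝ[X]) + 1) * legendreP (k + 1) =
      ((k : ℝ[X]) + 1) * (X * legendreP k) + (X ^ 2 - 1) * derivative (legendreP k) := by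
  have hA := derivative_legendreP_succ k
  have hA' := congrArg derivative hA
  simp only [derivative_add, derivative_mul, derivative_X, derivative_natCast,
    derivative_one] at hA'
  have hode := legendreP_ode k
  have hode' := legendreP_ode (k + 1)
  push_cast at hode'
  have hk : ((k : ℝ[X]) + 2) ≠ 0 := by
    rw [show ((k : ℝ[X]) + 2) = ((k + 2 : ℕ) : ℝ[X]) by push_cast; rfl]
    exact Nat.cast_ne_zero.mpr (by omega)
  refine mul_left_cancel₀ hk ?_
  linear_combination -hode' + (X ^ 2 - 1) * hA' + 2 * X * hA + X * hode

lemma one_sub_X_sq_mul_derivative_legendreP_succ (k : ℕ) :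
    (1 - X ^ 2) * derivative (legendreP (k + 1)) =
      ((k : ℝ[X]) + 1) * (legendreP k - X * legendreP (k + 1)) := by
  linear_combination (1 - X ^ 2) * derivative_legendreP_succ k + X * succ_mul_legendreP_succ k

lemma legendreP_recurrence (k : ℕ) :
    ((k : ℝ[X]) + 2) * legendreP (k + 2) =
      (2 * (k : ℝ[X]) + 3) * (X * legendreP (k + 1)) - ((k : ℝ[X]) + 1) * legendreP k := by
  have hD := succ_mul_legendreP_succ (k + 1)
  push_cast at hD
  linear_combination hD - one_sub_X_sq_mul_derivative_legendreP_succ k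

lemma derivative_legendreP_add_two (k : ℕ) :
    derivative (legendreP (k + 2)) =
      derivative (legendreP k) + (2 * (k : ℝ[X]) + 3) * legendreP (k + 1) := by
  have hA := derivative_legendreP_succ (k + 1)
  push_cast at hA
  linear_combination hA + X * derivative_legendreP_succ k - succ_mul_legendreP_succ k

lemma legendreP_sub_legendreP_add_two (k : ℕ) :
    (((k : ℝ[X]) + 1) * ((k : ℝ[X]) + 2)) * (legendreP k - legendreP (k + 2)) =
      (2 * (k : ℝ[X]) + 3) * ((1 - X ^ 2) * derivative (legendreP (k + 1))) := by
  linear_combination (-(2 * (k : ℝ[X]) + 3)) * one_sub_X_sq_mul_derivative_legendreP_succ k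
    - ((k : ℝ[X]) + 1) * legendreP_recurrence k

lemma eval_one_legendreP (n : ℕ) : (legendreP n).eval 1 = 1 := by
  induction n with
  | zero => simp [legendreP_zero]
  | succ k ih =>
    have h := congrArg (eval 1) (one_sub_X_sq_mul_derivative_legendreP_succ k)
    simp only [eval_mul, eval_sub, eval_add, eval_one, eval_pow, eval_X, eval_natCast, ih] at h
    have h' : ((k : ℝ) + 1) * ((legendreP (k + 1)).eval 1 - 1) = 0 := by linear_combination h
    linarith [(mul_eq_zero.1 h').resolve_left (by positivity)]

lemma eval_neg_one_legendreP (n : ℕ) : (legendreP n).eval (-1) = (-1) ^ n := by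
  induction n with
  | zero => simp [legendreP_zero]
  | succ k ih =>
    have h := congrArg (eval (-1)) (one_sub_X_sq_mul_derivative_legendreP_succ k)
    simp only [eval_mul, eval_sub, eval_add, eval_one, eval_pow, eval_X, eval_natCast, ih] at h
    have h' : ((k : ℝ) + 1) * ((legendreP (k + 1)).eval (-1) - (-1) ^ (k + 1)) = 0 := by
      linear_combination -h
    linarith [(mul_eq_zero.1 h').resolve_left (by positivity)]

lemma eval_zero_derivative_legendreP_succ (k : ℕ) :
    (derivative (legendreP (k + 1))).eval 0 = ((k : ℝ) + 1) * (legendreP k).eval 0 := by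
  simpa using congrArg (eval 0) (one_sub_X_sq_mul_derivative_legendreP_succ k)

lemma eval_zero_legendreP_sq_le (k : ℕ) :
    ((k : ℝ) + 1) * (legendreP k).eval 0 ^ 2 + ((k : ℝ) + 2) * (legendreP (k + 1)).eval 0 ^ 2
      ≤ 1 := by
  induction k with
  | zero => simp [legendreP_zero, legendreP_one]
  | succ k ih =>
    have h : ((k : ℝ) + 2) * (legendreP (k + 2)).eval 0
        = -(((k : ℝ) + 1) * (legendreP k).eval 0) := by
      simpa using congrArg (eval 0) (legendreP_recurrence k)
    -- the recurrence at `0`, and `(k + 1)(k + 3) ≤ (k + 2)²`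
    have hk : (0 : ℝ) < (k : ℝ) + 2 := by positivity
    have key : ((k : ℝ) + 3) * (legendreP (k + 2)).eval 0 ^ 2
        ≤ ((k : ℝ) + 1) * (legendreP k).eval 0 ^ 2 := by
      have h2 : ((k : ℝ) + 2) ^ 2 * (legendreP (k + 2)).eval 0 ^ 2
          = ((k : ℝ) + 1) ^ 2 * (legendreP k).eval 0 ^ 2 := by
        linear_combination
          (((k : ℝ) + 2) * (legendreP (k + 2)).eval 0 - ((k : ℝ) + 1) * (legendreP k).eval 0) * h
      nlinarith [sq_nonneg ((legendreP k).eval 0), sq_nonneg ((legendreP (k + 2)).eval 0)]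
    push_cast
    linarith

noncomputable def legendreEnergy (n : ℕ) : ℝ[X] :=
  ((1 - X ^ 2) * derivative (legendreP n)) ^ 2
    + ((n : ℝ[X]) * ((n : ℝ[X]) + 1)) * ((1 - X ^ 2) * legendreP n ^ 2)

lemma derivative_legendreEnergy (n : ℕ) :
    derivative (legendreEnergy n) =
      -(2 * (n : ℝ[X]) * ((n : ℝ[X]) + 1)) * (X * legendreP n ^ 2) := by
  simp only [legendreEnergy, derivative_add, derivative_mul, derivative_pow, derivative_one,
    derivative_sub, derivative_X, derivative_natCast, Nat.cast_ofNat, C_ofNat, mul_one]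
  push_cast
  linear_combination -2 * (1 - X ^ 2) * derivative (legendreP n) * legendreP_ode n

lemma eval_legendreEnergy_le_eval_zero (n : ℕ) (x : ℝ) :
    (legendreEnergy n).eval x ≤ (legendreEnergy n).eval 0 := by
  refine le_apply_zero_of_mul_deriv_nonpos (fun t => (legendreEnergy n).hasDerivAt t)
    (fun t => ?_) x
  rw [derivative_legendreEnergy]
  simp only [eval_mul, eval_neg, eval_X, eval_pow, eval_add, eval_natCast, eval_ofNat, eval_one]
  have : 0 ≤ 2 * (n : ℝ) * ((n : ℝ) + 1) * (t * (legendreP n).eval t) ^ 2 := by positivity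
  linarith

lemma eval_zero_legendreEnergy_le (n : ℕ) : (legendreEnergy n).eval 0 ≤ n := by
  rcases n with _ | k
  · simp [legendreEnergy, legendreP_zero]
  have h := eval_zero_legendreP_sq_le k
  simp only [legendreEnergy, eval_add, eval_mul, eval_pow, eval_sub, eval_one, eval_X,
    eval_natCast, eval_zero_derivative_legendreP_succ]
  push_cast
  nlinarith

lemma abs_one_sub_sq_mul_eval_derivative_legendreP_le (n : ℕ) {x : ℝ} (hx : x ∈ Icc (-1 : ℝ) 1) :
    |(1 - x ^ 2) * (derivative (legendreP n)).eval x| ≤ Real.sqrt n := by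
  have hx2 : 0 ≤ 1 - x ^ 2 := by nlinarith [hx.1, hx.2]
  have h : ((1 - x ^ 2) * (derivative (legendreP n)).eval x) ^ 2 ≤ (legendreEnergy n).eval x := by
    simp only [legendreEnergy, eval_add, eval_mul, eval_pow, eval_sub, eval_one, eval_X,
      eval_natCast]
    have : 0 ≤ (n : ℝ) * ((n : ℝ) + 1) * ((1 - x ^ 2) * (legendreP n).eval x ^ 2) := by positivity
    linarith
  rw [← Real.sqrt_sq_eq_abs]
  exact Real.sqrt_le_sqrt
    (h.trans ((eval_legendreEnergy_le_eval_zero n x).trans (eval_zero_legendreEnergy_le n)))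

lemma abs_eval_legendreP_sub_legendreP_add_two_le (k : ℕ) {x : ℝ} (hx : x ∈ Icc (-1 : ℝ) 1) :
    |(legendreP k).eval x - (legendreP (k + 2)).eval x|
      ≤ (2 * k + 3) / ((k + 2) * Real.sqrt (k + 1)) := by
  have h := congrArg (eval x) (legendreP_sub_legendreP_add_two k)
  simp only [eval_mul, eval_add, eval_sub, eval_one, eval_pow, eval_X, eval_natCast,
    eval_ofNat] at h
  have hB := abs_one_sub_sq_mul_eval_derivative_legendreP_le (k + 1) hx
  push_cast at hB
  have hs : 0 < Real.sqrt (k + 1) := Real.sqrt_pos.2 (by positivity)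
  have hss : Real.sqrt (k + 1) ^ 2 = k + 1 := Real.sq_sqrt (by positivity)
  have hmul : ((k : ℝ) + 1) * (k + 2) * |(legendreP k).eval x - (legendreP (k + 2)).eval x|
      ≤ (2 * k + 3) * Real.sqrt (k + 1) := by
    rw [← abs_of_pos (by positivity : (0 : ℝ) < ((k : ℝ) + 1) * (k + 2)), ← abs_mul, h, abs_mul,
      abs_of_pos (by positivity : (0 : ℝ) < 2 * k + 3)]
    gcongr
  rw [le_div_iff₀ (by positivity)]
  nlinarith

noncomputable def legendreAntideriv (k : ℕ) : ℝ[X] :=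
  C (2 * (k : ℝ) + 3)⁻¹ * (legendreP (k + 2) - legendreP k)

lemma derivative_legendreAntideriv (k : ℕ) :
    derivative (legendreAntideriv k) = legendreP (k + 1) := by
  have hk : (2 * (k : ℝ) + 3) ≠ 0 := by positivity
  rw [legendreAntideriv, derivative_C_mul, derivative_sub, derivative_legendreP_add_two,
    add_sub_cancel_left, ← mul_assoc,
    show (2 * (k : ℝ[X]) + 3) = C (2 * (k : ℝ) + 3) by simp [C_ofNat], ← C_mul,
    inv_mul_cancel₀ hk, C_1, one_mul]

lemma eval_one_legendreAntideriv (k : ℕ) : (legendreAntideriv k).eval 1 = 0 := by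
  simp [legendreAntideriv, eval_one_legendreP]

lemma eval_neg_one_legendreAntideriv (k : ℕ) : (legendreAntideriv k).eval (-1) = 0 := by
  simp [legendreAntideriv, eval_neg_one_legendreP, pow_add]

lemma abs_eval_legendreAntideriv_le (k : ℕ) {x : ℝ} (hx : x ∈ Icc (-1 : ℝ) 1) :
    |(legendreAntideriv k).eval x| ≤ 1 / ((k + 2) * Real.sqrt (k + 1)) := by
  have h := abs_eval_legendreP_sub_legendreP_add_two_le k hx
  have hk : (0 : ℝ) < 2 * k + 3 := by positivity
  simp only [legendreAntideriv, eval_mul, eval_C, eval_sub, abs_mul, abs_inv, abs_of_pos hk]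
  rwa [abs_sub_comm, inv_mul_le_iff₀ hk, mul_one_div]

section LegendreCoeff

variable {φ ψ : ℝ → ℝ}

lemma legendreCoeff_succ_eq (hφ : ∀ s ∈ Icc (-1 : ℝ) 1, HasDerivAt φ (ψ s) s)
    (hψ : IntervalIntegrable ψ volume (-1) 1) (k : ℕ) :
    legendreCoeff φ (k + 1)
      = -(1 / 2) * ∫ t in (-1 : ℝ)..1, ψ t * (legendreP (k + 2) - legendreP k).eval t := by
  rw [← uIcc_of_le (by norm_num : (-1 : ℝ) ≤ 1)] at hφ
  have hk : (2 * (k : ℝ) + 3) ≠ 0 := by positivity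
  have hA : ∫ t in (-1 : ℝ)..1, ψ t * (legendreP (k + 2) - legendreP k).eval t
      = (2 * k + 3) * ∫ t in (-1 : ℝ)..1, ψ t * (legendreAntideriv k).eval t := by
    rw [← intervalIntegral.integral_const_mul]
    refine intervalIntegral.integral_congr fun t _ => ?_
    simp only [legendreAntideriv, eval_mul, eval_C]
    field_simp
  rw [legendreCoeff, ← derivative_legendreAntideriv,
    integral_mul_eval_derivative_eq_neg hφ hψ (eval_neg_one_legendreAntideriv k)
      (eval_one_legendreAntideriv k), hA]
  push_cast
  ring

lemma abs_legendreCoeff_one_le (hφ : ∀ s ∈ Icc (-1 : ℝ) 1, HasDerivAt φ (ψ s) s)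
    (hψ : IntervalIntegrable ψ volume (-1) 1) {U : ℝ} (hU : ∀ s ∈ Icc (-1 : ℝ) 1, |ψ s| ≤ U) :
    |legendreCoeff φ 1| ≤ 3 / 2 * U := by
  have hbound : ∀ t ∈ uIoc (-1 : ℝ) 1,
      ‖ψ t * (legendreP 2 - legendreP 0).eval t‖ ≤ U * (3 / 2) := by
    intro t ht
    have ht' : t ∈ Icc (-1 : ℝ) 1 :=
      Ioc_subset_Icc_self (uIoc_of_le (by norm_num : (-1 : ℝ) ≤ 1) ▸ ht)
    have hP := abs_eval_legendreP_sub_legendreP_add_two_le 0 ht'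
    norm_num at hP
    rw [Real.norm_eq_abs, abs_mul, eval_sub, abs_sub_comm]
    exact mul_le_mul (hU t ht') hP (abs_nonneg _) ((abs_nonneg _).trans (hU t ht'))
  have hint := intervalIntegral.norm_integral_le_of_norm_le_const hbound
  rw [legendreCoeff_succ_eq hφ hψ 0, abs_mul]
  norm_num at hint ⊢
  linarith

lemma abs_legendreCoeff_add_two_le (hφ : ∀ s ∈ Icc (-1 : ℝ) 1, HasDerivAt φ (ψ s) s)
    (hψ : BoundedVariationOn ψ (Icc (-1 : ℝ) 1)) (k : ℕ) :
    |legendreCoeff φ (k + 2)|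
      ≤ 3 / 2 * (eVariationOn ψ (Icc (-1 : ℝ) 1)).toReal / ((k + 2) * Real.sqrt (k + 2)) := by
  have hψi := hψ.intervalIntegrable (by norm_num)
  set R := legendreAntideriv (k + 2) - legendreAntideriv k
  -- `R` is an antiderivative of `Pₖ₊₃ - Pₖ₊₁` vanishing at `±1`: integrate by parts once more
  have hint := abs_integral_mul_le_eVariationOn_mul (by norm_num) hψ (R := fun t => R.eval t)
    (g := fun t => (legendreP (k + 3) - legendreP (k + 1)).eval t)
    (fun t _ => by simpa [R, derivative_legendreAntideriv] using R.hasDerivAt t)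
    (Polynomial.continuous _).continuousOn
    (by simp [R, eval_neg_one_legendreAntideriv]) (by simp [R, eval_one_legendreAntideriv])
    (M := 1 / ((k + 4) * Real.sqrt (k + 3)) + 1 / ((k + 2) * Real.sqrt (k + 1))) fun t ht => by
      have h1 := abs_eval_legendreAntideriv_le (k + 2) ht
      have h2 := abs_eval_legendreAntideriv_le k ht
      push_cast at h1
      simp only [R, eval_sub]
      refine (abs_sub _ _).trans ?_
      convert add_le_add h1 h2 using 4 <;> ring_nf
  have hM := one_div_mul_sqrt_add_one_div_mul_sqrt_le k (Nat.cast_nonneg k)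
  rw [legendreCoeff_succ_eq hφ hψi (k + 1), abs_mul, abs_neg,
    abs_of_pos (by norm_num : (0 : ℝ) < 1 / 2)]
  refine (mul_le_mul_of_nonneg_left hint (by norm_num)).trans ?_
  calc 1 / 2 * ((eVariationOn ψ (Icc (-1 : ℝ) 1)).toReal
          * (1 / ((k + 4) * Real.sqrt (k + 3)) + 1 / ((k + 2) * Real.sqrt (k + 1))))
      ≤ 1 / 2 * ((eVariationOn ψ (Icc (-1 : ℝ) 1)).toReal
          * (3 / ((k + 2) * Real.sqrt (k + 2)))) := by
        gcongr
    _ = _ := by ring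

lemma abs_legendreCoeff_le (hφ : ∀ s ∈ Icc (-1 : ℝ) 1, HasDerivAt φ (ψ s) s) {U : ℝ}
    (hU : ∀ s ∈ Icc (-1 : ℝ) 1, |ψ s| ≤ U) (hψ : BoundedVariationOn ψ (Icc (-1 : ℝ) 1))
    {n : ℕ} (hn : 1 ≤ n) :
    |legendreCoeff φ n|
      ≤ 3 / 2 * (U + (eVariationOn ψ (Icc (-1 : ℝ) 1)).toReal) / (n : ℝ) ^ ((3 : ℝ) / 2) := by
  have hU0 : 0 ≤ U := (abs_nonneg _).trans (hU 0 (by norm_num))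
  have hV0 : 0 ≤ (eVariationOn ψ (Icc (-1 : ℝ) 1)).toReal := ENNReal.toReal_nonneg
  obtain _ | _ | k := n
  · omega
  · simpa using (abs_legendreCoeff_one_le hφ (hψ.intervalIntegrable (by norm_num)) hU).trans
      (by linarith)
  · rw [rpow_three_halves_eq (Nat.cast_nonneg _),
      show ((k + 1 + 1 : ℕ) : ℝ) = k + 2 by push_cast; ring]
    refine (abs_legendreCoeff_add_two_le hφ hψ k).trans
      (div_le_div_of_nonneg_right ?_ (by positivity))
    linarith

end LegendreCoeff

/-- Spectral-coefficient bounds for `(x_r^N)^{(m₁)}`: since its Legendre coefficients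
coincide with those of `φ = x_r^{(m₁)}` (whose derivative `ψ = x_r^{(m₁+1)}` is bounded
by `U` and has variation `V`), they satisfy `|a_n| ≤ (6/√π)(U+V) n^{-3/2}` for
`1 ≤ n ≤ N-r-1`, and consequently
`∑_{n=0}^{N-r-m₁+1} |a_n| ≤ |a_0| + (6/√π)(U+V) ζ(3/2)`. -/
theorem stmt15_spectral_coefficient_bounds
    (N r m₁ : ℕ)
    (φ ψ : ℝ → ℝ)
    (hderiv : ∀ s ∈ Icc (-1 : ℝ) 1, HasDerivAt φ (ψ s) s)
    (U V : ℝ)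
    (hU : ∀ s ∈ Icc (-1 : ℝ) 1, |ψ s| ≤ U)
    (hBV : BoundedVariationOn ψ (Icc (-1 : ℝ) 1))
    (hV : (eVariationOn ψ (Icc (-1 : ℝ) 1)).toReal = V) :
    (∀ n : ℕ, 1 ≤ n → n ≤ N - r - 1 →
      |legendreCoeff φ n| ≤ 6 / Real.sqrt Real.pi * (U + V) / (n : ℝ) ^ ((3 : ℝ) / 2)) ∧
    ∑ n ∈ Finset.range (N - r - m₁ + 2), |legendreCoeff φ n| ≤
      |legendreCoeff φ 0| +
        6 / Real.sqrt Real.pi * (U + V) * ∑' k : ℕ, 1 / ((k : ℝ) + 1) ^ ((3 : ℝ) / 2) := by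
  subst hV
  have hUV : 0 ≤ U + (eVariationOn ψ (Icc (-1 : ℝ) 1)).toReal :=
    add_nonneg ((abs_nonneg _).trans (hU 0 (by norm_num))) ENNReal.toReal_nonneg
  -- `√π ≤ 2`
  have hconst : (3 : ℝ) / 2 ≤ 6 / Real.sqrt Real.pi := by
    rw [le_div_iff₀ (Real.sqrt_pos.2 Real.pi_pos)]
    nlinarith [Real.sq_sqrt Real.pi_pos.le, Real.sqrt_nonneg Real.pi, Real.pi_le_four]
  have hbound : ∀ n : ℕ, 1 ≤ n →
      |legendreCoeff φ n| ≤ 6 / Real.sqrt Real.pi * (U + (eVariationOn ψ (Icc (-1 : ℝ) 1)).toReal)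
        / (n : ℝ) ^ ((3 : ℝ) / 2) := fun n hn =>
    (abs_legendreCoeff_le hderiv hU hBV hn).trans (by gcongr)
  exact ⟨fun n hn _ => hbound n hn, sum_range_abs_le_add_mul_tsum (by norm_num) hbound _⟩
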